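/- arXiv:1902.01225 — 2 statements merged into one kernel-verified Lean document; each statement's English description precedes it below -/
import Mathlib

section
/- Let FreeGrp be the full subcategory of the category Grp of groups on those groups G satisfying IsFreeGroup G, and let U : FreeGrp ⥤ Type be the restriction of the forgetful functor. Then: U has a left adjoint (induced by X ↦ FreeGroup X, which lands in FreeGrp); U reflects isomorphisms; but U is not monadic, i.e. the comparison to the Eilenberg–Moore category of the induced monad is not an equivalence (¬ MonadicRightAdjoint U). -/
open CategoryTheory

universe u

/-- The full subcategory of `Grp` on free groups. -/
abbrev FreeGrp := ObjectProperty.FullSubcategory (fun G : GrpCat.{u} => IsFreeGroup G)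

/-- The restriction of the forgetful functor `Grp ⥤ Type` to the full subcategory of free
groups. -/
abbrev FreeGrp.forget : FreeGrp.{u} ⥤ Type u :=
  ObjectProperty.ι (fun G : GrpCat.{u} => IsFreeGroup G) ⋙ CategoryTheory.forget GrpCat.{u}

/-! A monadic functor creates limits, so `FreeGrp` would contain a product of two copies of
`FreeGroup PUnit ≃* ℤ` whose underlying set is the product of the underlying sets; its projections
then identify it as a group with `ℤ × ℤ`. But a commutative free group has at most one generator,
hence is cyclic, and `ℤ × ℤ` is not. -/

lemma FreeGroup.not_commute_of_of_ne {α : Type*} {a b : α} (hab : a ≠ b) :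
    ¬ Commute (FreeGroup.of a) (FreeGroup.of b) := by
  classical
  intro h
  have hperm := congrArg
    (FreeGroup.lift fun s => if s = a then Equiv.swap (0 : Fin 3) 1 else Equiv.swap 1 2) h
  simp only [_root_.map_mul, FreeGroup.lift_apply_of, if_neg hab.symm] at hperm
  exact absurd hperm (by decide)

lemma IsFreeGroup.isCyclic_of_isMulCommutative (G : Type*) [Group G] [IsFreeGroup G]
    [IsMulCommutative G] : IsCyclic G := by
  have : Subsingleton (IsFreeGroup.Generators G) := ⟨fun a b => by
    by_contra hab
    refine FreeGroup.not_commute_of_of_ne hab ((IsFreeGroup.toFreeGroup G).symm.injective ?_)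
    simp only [map_mul, mul_comm']⟩
  rw [(IsFreeGroup.toFreeGroup G).isCyclic]
  cases isEmpty_or_nonempty (IsFreeGroup.Generators G)
  · infer_instance
  · have := uniqueOfSubsingleton (Classical.arbitrary (IsFreeGroup.Generators G))
    infer_instance

lemma not_isFreeGroup_prod (G H : Type*) [Group G] [Group H] [IsCyclic G] [IsCyclic H]
    [Infinite G] [Nontrivial H] : ¬ IsFreeGroup (G × H) := fun _ =>
  not_isCyclic_prod_of_infinite_nontrivial G H (IsFreeGroup.isCyclic_of_isMulCommutative _)

open Limits

lemma bijective_map_fst_map_snd_of_preservesLimit {C : Type*} [Category C] (U : C ⥤ Type*)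
    (X Y : C) [HasBinaryProduct X Y] [PreservesLimit (pair X Y) U] :
    Function.Bijective fun p =>
      (U.map (prod.fst : X ⨯ Y ⟶ X) p, U.map (prod.snd : X ⨯ Y ⟶ Y) p) := by
  convert (asIso (prodComparison U X Y) ≪≫ Types.binaryProductIso _ _).toEquiv.bijective using 1
  funext p
  ext
  · exact (ConcreteCategory.congr_hom (prodComparison_fst U X Y) p).symm
  · exact (ConcreteCategory.congr_hom (prodComparison_snd U X Y) p).symm

namespace FreeGrp

noncomputable def free : Type u ⥤ FreeGrp.{u} :=
  ObjectProperty.lift _ GrpCat.free fun X => (inferInstance : IsFreeGroup (FreeGroup X))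

noncomputable def adj : free.{u} ⊣ forget.{u} :=
  GrpCat.adj.restrictFullyFaithful (Functor.FullyFaithful.id _) (ObjectProperty.fullyFaithfulι _)
    (Functor.leftUnitor _ ≪≫ (ObjectProperty.liftCompιIso _ _ _).symm) (Functor.rightUnitor _).symm

instance isRightAdjoint_forget : forget.{u}.IsRightAdjoint := ⟨_, ⟨adj⟩⟩

lemma isFreeGroup_prod_of_preservesLimit_pair (A B : FreeGrp.{u}) [HasBinaryProduct A B]
    [PreservesLimit (pair A B) forget] : IsFreeGroup (A.obj × B.obj) :=
  have : IsFreeGroup (A ⨯ B).obj := (A ⨯ B).property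
  IsFreeGroup.ofMulEquiv <| MulEquiv.ofBijective (M := (A ⨯ B).obj)
    ((prod.fst : A ⨯ B ⟶ A).hom.hom.prod (prod.snd : A ⨯ B ⟶ B).hom.hom)
    (bijective_map_fst_map_snd_of_preservesLimit forget A B)

instance isEmpty_monadicRightAdjoint_forget : IsEmpty (MonadicRightAdjoint forget.{u}) := by
  refine ⟨fun _ => ?_⟩
  let A : FreeGrp.{u} :=
    ⟨GrpCat.of (FreeGroup PUnit), inferInstanceAs (IsFreeGroup (FreeGroup _))⟩
  have : CreatesLimitsOfSize.{0, 0} forget.{u} := monadicCreatesLimits _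
  have := hasLimit_of_created (pair A A) forget
  have := preservesLimit_of_createsLimit_and_hasLimit (pair A A) forget
  exact not_isFreeGroup_prod _ _ (isFreeGroup_prod_of_preservesLimit_pair A A)

end FreeGrp

/-- The restricted forgetful functor `U : FreeGrp ⥤ Type` has a left adjoint and reflects
isomorphisms, but is not monadic. -/
theorem freeGrp_forget_not_monadic :
    FreeGrp.forget.{u}.IsRightAdjoint ∧ FreeGrp.forget.{u}.ReflectsIsomorphisms ∧
      IsEmpty (MonadicRightAdjoint FreeGrp.forget.{u}) :=
  ⟨FreeGrp.isRightAdjoint_forget, inferInstance, FreeGrp.isEmpty_monadicRightAdjoint_forget⟩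
end

section
/- Let 𝟚 denote Fin 2 with its linear order, regarded as a category. The functor category (Discrete Bool) ⥤ 𝟚 is not equivalent to 𝟚 (hence in particular not isomorphic to it). Consequently, the covariant hom 2-functor Cat(x, −) with x = Discrete Bool does not send 𝟚 to a category equivalent to 𝟚, witnessing that the Yoneda embedding of Cat does not preserve the opcomma object 𝟚 = id₁ ↑ id₁. -/
open CategoryTheory

/-- The functor category `Discrete Bool ⥤ Fin 2` is not equivalent to the walking arrow
`Fin 2`: the Yoneda embedding of `Cat` does not preserve the opcomma object
`𝟚 = id₁ ↑ id₁`. -/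
theorem functorCategory_discreteBool_walkingArrow_not_equivalent :
    IsEmpty ((Discrete Bool ⥤ Fin 2) ≌ Fin 2) := by
  constructor
  intro e
  have hinj : Function.Injective
      (fun f : Bool → Fin 2 => e.functor.obj (Discrete.functor f)) := by
    intro f g h
    dsimp at h
    have i : Discrete.functor f ≅ Discrete.functor g :=
      e.functor.preimageIso (eqToIso h)
    funext b
    have j := i.app ⟨b⟩
    exact le_antisymm (leOfHom j.hom) (leOfHom j.inv)
  have := Fintype.card_le_of_injective _ hinj
  simp at this
end
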